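/- If p, q : [0,1] → ℝ satisfy, for all t ∈ [0,1], both t + 2q(t) + p(t) ≥ 0 and t − 2q(t) + p(t) ≥ 0, and the functions t ↦ t + 2q(t) + p(t) and t ↦ t − 2q(t) + p(t) are monotone nondecreasing, and (p(t) − t)² ≤ (t + 2q(t) + p(t))(t − 2q(t) + p(t)) and (q(t) − t)² ≤ t(t − 2q(t) + p(t)) for all t, and moreover p(1) < 1 and p(1) − 1 ≥ 2(q(1) − 1), then for every t ∈ [0,1]: (p(t) − t)² < 8(1 − q(1)) and (q(t) − t)² < 2(1 − q(1)). -/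
import Mathlib


open Set

theorem stmt_0 (p q : ℝ → ℝ)
    (hpos1 : ∀ t ∈ Icc (0:ℝ) 1, 0 ≤ t + 2 * q t + p t)
    (hpos2 : ∀ t ∈ Icc (0:ℝ) 1, 0 ≤ t - 2 * q t + p t)
    (hmono1 : MonotoneOn (fun t => t + 2 * q t + p t) (Icc (0:ℝ) 1))
    (hmono2 : MonotoneOn (fun t => t - 2 * q t + p t) (Icc (0:ℝ) 1))
    (hCS1 : ∀ t ∈ Icc (0:ℝ) 1,
      (p t - t) ^ 2 ≤ (t + 2 * q t + p t) * (t - 2 * q t + p t))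
    (hCS2 : ∀ t ∈ Icc (0:ℝ) 1,
      (q t - t) ^ 2 ≤ t * (t - 2 * q t + p t))
    (hp1 : p 1 < 1)
    (hpq : p 1 - 1 ≥ 2 * (q 1 - 1)) :
    ∀ t ∈ Icc (0:ℝ) 1,
      (p t - t) ^ 2 < 8 * (1 - q 1) ∧ (q t - t) ^ 2 < 2 * (1 - q 1) := by
  intro t ht
  obtain ⟨ht0, ht1⟩ := ht
  have h1 : (1:ℝ) ∈ Icc (0:ℝ) 1 := by norm_num
  have hAt := hpos1 t ⟨ht0, ht1⟩
  have hBt := hpos2 t ⟨ht0, ht1⟩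
  have hA := hmono1 ⟨ht0, ht1⟩ h1 ht1
  have hB := hmono2 ⟨ht0, ht1⟩ h1 ht1
  simp only at hA hB
  have hB1 : 0 ≤ 1 - 2 * q 1 + p 1 := by linarith
  have hq1 : q 1 < 1 := by linarith
  constructor
  · have h := hCS1 t ⟨ht0, ht1⟩
    have hprod : (t + 2 * q t + p t) * (t - 2 * q t + p t)
        ≤ (1 + 2 * q 1 + p 1) * (1 - 2 * q 1 + p 1) :=
      mul_le_mul hA hB hBt (by linarith)
    nlinarith [mul_nonneg hB1 (by linarith : (0:ℝ) ≤ 4 - (1 + 2 * q 1 + p 1))]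
  · have h := hCS2 t ⟨ht0, ht1⟩
    have hprod : t * (t - 2 * q t + p t) ≤ 1 * (1 - 2 * q 1 + p 1) :=
      mul_le_mul ht1 hB hBt (by norm_num)
    nlinarith
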